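/- In the 15-puzzle represented as a permutation of {1,…,15,blank} on a 4×4 grid, each legal move (sliding a tile into the adjacent blank) changes the parity of the permutation of the 16 cells and simultaneously changes the parity of the taxicab distance of the blank from its home corner; hence the sum of the permutation parity and the blank's row-plus-column parity is invariant under legal moves. Consequently, a configuration in which exactly the tiles 14 and 15 are transposed from the solved position (with the blank in its home corner) is not reachable from the solved configuration. -/
import Mathlib


namespace Puzzle15

/-- Grid positions of the 4×4 board. -/
abbrev Pos := Fin 4 × Fin 4

/-- Values: `some k` is the tile numbered `k+1` (for `k : Fin 15`), and
`none` is the blank. -/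
abbrev Val := Option (Fin 15)

/-- A state of the 15-puzzle: a bijection from positions to values. -/
abbrev St := Pos ≃ Val

/-- The solved configuration: tiles 1,…,15 in order (row-major) with the
blank in the last (home) corner. -/
def solved : St :=
  finProdFinEquiv.trans ((finCongr (by norm_num)).trans finSuccEquivLast)

/-- Taxicab distance between two grid positions. -/
def tax (p q : Pos) : ℕ :=
  ((p.1 : ℤ) - (q.1 : ℤ)).natAbs + ((p.2 : ℤ) - (q.2 : ℤ)).natAbs

/-- Orthogonal adjacency. -/
def Adj (p q : Pos) : Prop := tax p q = 1

/-- A legal move: the blank (at position `p`) is swapped with the tile in an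
orthogonally adjacent cell `q`. -/
def Move (s s' : St) : Prop :=
  ∃ p q : Pos, Adj p q ∧ s p = none ∧ s' = (Equiv.swap p q).trans s

/-- The permutation of the 16 cells relative to the solved configuration. -/
def perm (s : St) : Equiv.Perm Pos := s.trans solved.symm

/-- The position of the blank. -/
def blank (s : St) : Pos := s.symm none

/-- The home corner of the blank (its position in the solved state). -/
def home : Pos := solved.symm none

lemma home_eq : home = (3,3) := by decide

lemma tax_parity (p q : Pos) :
    tax p q % 2 = (p.1.val + p.2.val + q.1.val + q.2.val) % 2 := by
  revert p q; decide

lemma neg_one_pow_congr {m n : ℕ} (h : m % 2 = n % 2) :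
    (-1 : ℤˣ) ^ m = (-1 : ℤˣ) ^ n := by
  rw [← Nat.div_add_mod m 2, ← Nat.div_add_mod n 2, pow_add, pow_add,
    pow_mul, pow_mul, h]
  norm_num

/-- Each legal move changes the parity of the permutation of the 16 cells and
simultaneously changes the parity of the taxicab distance of the blank from
its home corner; hence the sum of the permutation parity and the blank's
row-plus-column parity is invariant under legal moves. Consequently, the
configuration in which exactly tiles 14 and 15 are transposed from the solved
position (blank at its home corner) is not reachable from the solved
configuration. -/
theorem parity_invariant_and_fourteen_fifteen_unreachable :
    (∀ s s' : St, Move s s' →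
      Equiv.Perm.sign (perm s') = - Equiv.Perm.sign (perm s) ∧
      (-1 : ℤˣ) ^ tax (blank s') home = - ((-1 : ℤˣ) ^ tax (blank s) home)) ∧
    (∀ s s' : St, Relation.ReflTransGen Move s s' →
      Equiv.Perm.sign (perm s') *
          (-1 : ℤˣ) ^ ((blank s').1.val + (blank s').2.val) =
        Equiv.Perm.sign (perm s) *
          (-1 : ℤˣ) ^ ((blank s).1.val + (blank s).2.val)) ∧
    ¬ Relation.ReflTransGen Move solved
        (solved.trans (Equiv.swap (some (13 : Fin 15)) (some (14 : Fin 15)))) := by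
  have blank_pow : ∀ s : St, (-1 : ℤˣ) ^ tax (blank s) home
      = (-1 : ℤˣ) ^ ((blank s).1.val + (blank s).2.val) := by
    intro s
    apply neg_one_pow_congr
    rw [home_eq]
    have : ∀ p : Pos, tax p (3,3) % 2 = (p.1.val + p.2.val) % 2 := by decide
    exact this _
  have hmove : ∀ s s' : St, Move s s' →
      Equiv.Perm.sign (perm s') = - Equiv.Perm.sign (perm s) ∧
      (-1 : ℤˣ) ^ tax (blank s') home = - ((-1 : ℤˣ) ^ tax (blank s) home) := by
    intro s s' ⟨p, q, hadj, hp, hs'⟩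
    have hpq : p ≠ q := by
      intro h; subst h; simp [Adj, tax] at hadj
    have hperm : perm s' = perm s * Equiv.swap p q := by
      subst hs'
      rfl
    have hbs : blank s = p := by
      simp [blank, ← hp]
    have hbs' : blank s' = q := by
      subst hs'
      simp [blank, Equiv.symm_trans_apply, ← hp, Equiv.swap_apply_left]
    constructor
    · rw [hperm, Equiv.Perm.sign_mul, Equiv.Perm.sign_swap hpq, mul_neg_one]
    · rw [hbs, hbs']
      have h1 : tax q home % 2 = (tax p home + 1) % 2 := by
        have h2 := tax_parity p home
        have h3 := tax_parity q home
        have h4 := tax_parity p q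
        rw [hadj] at h4
        omega
      rw [neg_one_pow_congr h1, pow_succ, mul_neg_one]
  have hinv : ∀ s s' : St, Relation.ReflTransGen Move s s' →
      Equiv.Perm.sign (perm s') *
          (-1 : ℤˣ) ^ ((blank s').1.val + (blank s').2.val) =
        Equiv.Perm.sign (perm s) *
          (-1 : ℤˣ) ^ ((blank s).1.val + (blank s).2.val) := by
    intro s s' h
    induction h with
    | refl => rfl
    | tail _ hm ih =>
        rename_i b c _
        obtain ⟨h1, h2⟩ := hmove b c hm
        rw [← blank_pow c, ← blank_pow b] at *
        rw [h1, h2, ← ih, neg_mul_neg]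
  refine ⟨hmove, hinv, fun h => ?_⟩
  have := hinv _ _ h
  have hps : perm solved = Equiv.refl Pos := Equiv.self_trans_symm _
  set t := solved.trans (Equiv.swap (some (13 : Fin 15)) (some (14 : Fin 15))) with ht
  have hpt : perm t = Equiv.permCongr solved.symm
      (Equiv.swap (some (13 : Fin 15)) (some (14 : Fin 15))) := rfl
  have hbt : blank t = home := by
    simp [blank, ht, Equiv.symm_trans_apply, Equiv.swap_apply_of_ne_of_ne, home]
  have hbsolved : blank solved = home := rfl
  rw [hps, hpt, hbt, hbsolved, Equiv.Perm.sign_permCongr,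
    Equiv.Perm.sign_swap (by decide), Equiv.Perm.sign_refl, home_eq] at this
  simp at this


end Puzzle15
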